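/- arXiv:2202.10766 — 2 statements merged into one kernel-verified Lean document; each statement's English description precedes it below -/
import Mathlib

section
/- If K is a commutative, absorptive, ω-continuous semiring, then for every Datalog program Σ, annotated database (D,K,λ), and fact α, NRT(Σ,D,K,λ,α) = AT(Σ,D,K,λ,α). -/
attribute [local instance] Classical.propDecidable

namespace Datalog

/-- Terms are built from constants and variables. -/
inductive Term (C V : Type) : Type
  | const : C → Term C V
  | var : V → Term C V

/-- An atom over predicates `P` with arguments of type `τ`. -/
structure Atom (P τ : Type) : Type where
  pred : P
  args : List τ

/-- A fact (ground atom) has constants as arguments. -/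
abbrev Fact (P C : Type) := Atom P C

/-- Substitution of a variable assignment in a term. -/
def Term.subst {C : Type} {n : ℕ} (σ : Fin n → C) : Term C (Fin n) → C
  | Term.const c => c
  | Term.var v => σ v

/-- Substitution of a variable assignment in an atom, producing a fact. -/
def Atom.subst {P C : Type} {n : ℕ} (σ : Fin n → C) (a : Atom P (Term C (Fin n))) : Fact P C :=
  ⟨a.pred, a.args.map (Term.subst σ)⟩

/-- Renaming of predicates in an atom. -/
def Atom.mapPred {P Q τ : Type} (f : P → Q) (a : Atom P τ) : Atom Q τ := ⟨f a.pred, a.args⟩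

/-- Turn a fact into a (ground) rule atom. -/
def Atom.toRuleAtom {P C : Type} (n : ℕ) (a : Fact P C) : Atom P (Term C (Fin n)) :=
  ⟨a.pred, a.args.map Term.const⟩

/-- A (normalized) Datalog rule `φ(x⃗,y⃗) → H(x⃗)`: the body is a conjunction of atoms over
variables `x⃗ ∪ y⃗` (every variable of the rule occurs in the body), the head a single atom. -/
structure Rule (P C : Type) : Type where
  nvars : ℕ
  nbody : ℕ
  body : Fin nbody → Atom P (Term C (Fin nvars))
  head : Atom P (Term C (Fin nvars))
  vars_in_body : ∀ v : Fin nvars, ∃ i : Fin nbody, Term.var v ∈ (body i).args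

variable {P C K : Type}

/-- A set of facts is closed under the rules of a program. -/
def ClosedUnder (prog : Set (Rule P C)) (I : Set (Fact P C)) : Prop :=
  ∀ r ∈ prog, ∀ σ : Fin r.nvars → C,
    (∀ i, (r.body i).subst σ ∈ I) → r.head.subst σ ∈ I

/-- `Σ, D ⊨ α` : the fact `α` belongs to every set of facts containing `D`
and closed under the rules of `Σ`. -/
def Entails (prog : Set (Rule P C)) (D : Set (Fact P C)) (a : Fact P C) : Prop :=
  ∀ I : Set (Fact P C), D ⊆ I → ClosedUnder prog I → a ∈ I

/-- Derivation trees of a fact w.r.t. a program and a database: leaves are labeled by facts of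
`D`; an inner node is labeled by a rule `r ∈ Σ` together with a homomorphism `σ`, its children
corresponding bijectively to the body atoms of `r`, and derives the fact `σ(head r)`. -/
inductive DTree {P C : Type} (prog : Set (Rule P C)) (D : Set (Fact P C)) : Fact P C → Type
  | leaf (a : Fact P C) (ha : a ∈ D) : DTree prog D a
  | node (r : Rule P C) (hr : r ∈ prog) (σ : Fin r.nvars → C)
      (children : ∀ i : Fin r.nbody, DTree prog D ((r.body i).subst σ)) :
      DTree prog D (r.head.subst σ)

namespace DTree

variable {prog : Set (Rule P C)} {D : Set (Fact P C)}

/-- `Λ(t)`: the product of the annotations of the leaves of `t`. -/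
def weight [CommSemiring K] (lam : Fact P C → K) : ∀ {a : Fact P C}, DTree prog D a → K
  | _, .leaf a _ => lam a
  | _, .node r _ _ ch => ∏ i : Fin r.nbody, weight lam (ch i)

/-- The depth of a derivation tree. -/
def depth : ∀ {a : Fact P C}, DTree prog D a → ℕ
  | _, .leaf _ _ => 0
  | _, .node r _ _ ch => (Finset.univ.sup fun i : Fin r.nbody => depth (ch i)) + 1

/-- A derivation tree of `a` is of minimal depth if no derivation tree of `a` is of
smaller depth. -/
def minimalDepth {a : Fact P C} (t : DTree prog D a) : Prop :=
  ∀ t' : DTree prog D a, t.depth ≤ t'.depth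

/-- A derivation tree is hereditary minimal-depth if every subtree rooted at an inner node
is a minimal-depth derivation tree of the fact it derives. -/
def hereditaryMinimal : ∀ {a : Fact P C}, DTree prog D a → Prop
  | _, .leaf _ _ => True
  | _, .node r hr σ ch =>
      minimalDepth (.node r hr σ ch) ∧ ∀ i, hereditaryMinimal (ch i)

/-- `t.avoid s` : no fact labeling a node of `t` belongs to `s`, nor is repeated along a
root-to-leaf path. -/
def avoid : Set (Fact P C) → ∀ {a : Fact P C}, DTree prog D a → Prop
  | s, _, .leaf a _ => a ∉ s
  | s, _, .node r _ σ ch =>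
      r.head.subst σ ∉ s ∧ ∀ i, avoid (insert (r.head.subst σ) s) (ch i)

/-- A derivation tree is non-recursive if it does not contain two nodes labeled with the same
fact such that one is a descendant of the other. -/
def nonRecursive {a : Fact P C} (t : DTree prog D a) : Prop := t.avoid ∅

/-- `t.hasLeaf x` : `x` labels some leaf of `t`. -/
def hasLeaf (x : Fact P C) : ∀ {a : Fact P C}, DTree prog D a → Prop
  | _, .leaf a _ => a = x
  | _, .node _ _ _ ch => ∃ i, hasLeaf x (ch i)

end DTree

/-- The finite partial sums of `f` over the set `S`. -/
def partialSums {T : Type} [AddCommMonoid K] (S : Set T) (f : T → K) : Set K :=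
  { x | ∃ F : Finset T, ↑F ⊆ S ∧ x = ∑ t ∈ F, f t }

/-- The (possibly infinite) sum of `f` over `S`, i.e. the least upper bound of the finite
partial sums (junk value `0` if no least upper bound exists). -/
noncomputable def setSum {T : Type} [AddCommMonoid K] [PartialOrder K]
    (S : Set T) (f : T → K) : K :=
  if h : ∃ s, IsLUB (partialSums S f) s then h.choose else 0

/-- The greatest lower bound of a set of semiring elements (junk value `0` if none exists). -/
noncomputable def setInf [Zero K] [PartialOrder K] (S : Set K) : K :=
  if h : ∃ z, IsGLB S z then h.choose else 0

/-- A commutative ω-continuous semiring: the natural order `a ≤ b ↔ ∃ c, a + c = b` is a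
partial order, every ω-chain has a least upper bound, and `+` and `×` preserve these
least upper bounds. -/
class OmegaCommSemiring (K : Type) extends CommSemiring K, PartialOrder K where
  le_iff_exists_add : ∀ a b : K, a ≤ b ↔ ∃ c, a + c = b
  chain_lub : ∀ f : ℕ → K, Monotone f → ∃ s, IsLUB (Set.range f) s
  add_lub : ∀ (f : ℕ → K) (a s : K), Monotone f → IsLUB (Set.range f) s →
    IsLUB (Set.range fun n => a + f n) (a + s)
  mul_lub : ∀ (f : ℕ → K) (a s : K), Monotone f → IsLUB (Set.range f) s →
    IsLUB (Set.range fun n => a * f n) (a * s)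

/-- A positive semiring: a product is zero iff one factor is, a sum is zero iff both
summands are. -/
def PositiveSemiring (K : Type) [CommSemiring K] : Prop :=
  (∀ a b : K, a * b = 0 ↔ a = 0 ∨ b = 0) ∧ (∀ a b : K, a + b = 0 ↔ a = 0 ∧ b = 0)

/-- An annotated database: a set of facts together with an annotation function assigning a
semiring element to every fact (`0` outside the database). -/
structure AnnDB (P C K : Type) [Zero K] : Type where
  facts : Set (Fact P C)
  ann : Fact P C → K
  ann_eq_zero : ∀ a ∉ facts, ann a = 0

/-- Union of two annotated databases: annotations are added pointwise. -/
noncomputable def AnnDB.union [AddCommMonoid K] (d₁ d₂ : AnnDB P C K) : AnnDB P C K where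
  facts := d₁.facts ∪ d₂.facts
  ann a := d₁.ann a + d₂.ann a
  ann_eq_zero a ha := by
    show d₁.ann a + d₂.ann a = 0
    rw [d₁.ann_eq_zero a fun h => ha (Set.mem_union_left _ h),
      d₂.ann_eq_zero a fun h => ha (Set.mem_union_right _ h), add_zero]

/-- The facts derivable from `I` by one application of a rule of `prog`. -/
def derivable (prog : Set (Rule P C)) (I : Set (Fact P C)) : Set (Fact P C) :=
  { a | ∃ r ∈ prog, ∃ σ : Fin r.nvars → C,
      (∀ i, (r.body i).subst σ ∈ I) ∧ r.head.subst σ = a }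

/-- The relational provenance of the immediate consequences: the sum over all rules and
homomorphisms deriving `a` of the product of the annotations of the body facts. -/
noncomputable def ruleSum [CommSemiring K] (prog : Set (Rule P C)) (I : Set (Fact P C))
    (lam : Fact P C → K) (a : Fact P C) : K :=
  ∑ᶠ (p : (r : Rule P C) × (Fin r.nvars → C))
      (_ : p.1 ∈ prog ∧ (∀ i, (p.1.body i).subst p.2 ∈ I) ∧ p.1.head.subst p.2 = a),
    ∏ i : Fin p.1.nbody, lam ((p.1.body i).subst p.2)

/-- The annotation-aware immediate consequence operator `T_Σ`. -/
noncomputable def Tcons [CommSemiring K] (prog : Set (Rule P C)) (db : AnnDB P C K) :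
    AnnDB P C K where
  facts := derivable prog db.facts
  ann a := if a ∈ derivable prog db.facts then ruleSum prog db.facts db.ann a else 0
  ann_eq_zero a ha := if_neg ha

/-- The operator `Δ_Σ`: `T_Σ` restricted to the newly derived facts. -/
noncomputable def Dcons [CommSemiring K] (prog : Set (Rule P C)) (db : AnnDB P C K) :
    AnnDB P C K where
  facts := (Tcons prog db).facts \ db.facts
  ann a := if a ∈ (Tcons prog db).facts \ db.facts then (Tcons prog db).ann a else 0
  ann_eq_zero a ha := if_neg ha

/-- The naive evaluation sequence `I_n^0 := (D,K,λ)`, `I_n^{i+1} := T_Σ(I_n^i) ∪ (D,K,λ)`. -/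
noncomputable def naiveSeq [CommSemiring K] (prog : Set (Rule P C)) (db : AnnDB P C K) :
    ℕ → AnnDB P C K
  | 0 => db
  | i + 1 => (Tcons prog (naiveSeq prog db i)).union db

/-- The naive execution provenance semantics: the least upper bound of the annotations of `a`
along the naive evaluation sequence (and `0` if `a` is never derived). -/
noncomputable def NE [CommSemiring K] [PartialOrder K] (prog : Set (Rule P C))
    (db : AnnDB P C K) (a : Fact P C) : K :=
  if ∃ i, a ∈ (naiveSeq prog db i).facts then
    (if h : ∃ s, IsLUB (Set.range fun i => (naiveSeq prog db i).ann a) s then h.choose else 0)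
  else 0

/-- The optimized naive evaluation sequence, which stops as soon as the target fact is
derived. -/
noncomputable def optSeq [CommSemiring K] (prog : Set (Rule P C)) (db : AnnDB P C K)
    (target : Fact P C) : ℕ → AnnDB P C K
  | 0 => db
  | i + 1 =>
      if target ∈ (optSeq prog db target i).facts then optSeq prog db target i
      else (Tcons prog (optSeq prog db target i)).union db

/-- The optimized execution provenance semantics: the annotation of the target fact at the
stabilization point of the optimized naive evaluation sequence. -/
noncomputable def OE [CommSemiring K] (prog : Set (Rule P C)) (db : AnnDB P C K)
    (target : Fact P C) : K :=
  if h : ∃ k, ∀ ℓ, k ≤ ℓ → optSeq prog db target ℓ = optSeq prog db target k then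
    (optSeq prog db target h.choose).ann target
  else 0

/-- The seminaive evaluation sequence `I_sn^0 := (D,K,λ)`, `I_sn^{i+1} := I_sn^i ∪ Δ_Σ(I_sn^i)`. -/
noncomputable def semiSeq [CommSemiring K] (prog : Set (Rule P C)) (db : AnnDB P C K) :
    ℕ → AnnDB P C K
  | 0 => db
  | i + 1 => (semiSeq prog db i).union (Dcons prog (semiSeq prog db i))

/-- The seminaive execution provenance semantics: the annotation of the fact at the
stabilization point of the seminaive evaluation sequence. -/
noncomputable def SNE [CommSemiring K] (prog : Set (Rule P C)) (db : AnnDB P C K)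
    (a : Fact P C) : K :=
  if h : ∃ k, ∀ ℓ, k ≤ ℓ → semiSeq prog db ℓ = semiSeq prog db k then
    (semiSeq prog db h.choose).ann a
  else 0

/-- The all-tree provenance semantics `AT`: the (possibly infinite) sum, over all derivation
trees of `a`, of the product of the annotations of the leaves. -/
noncomputable def AT [CommSemiring K] [PartialOrder K] (prog : Set (Rule P C))
    (db : AnnDB P C K) (a : Fact P C) : K :=
  setSum (Set.univ : Set (DTree prog db.facts a)) fun t => t.weight db.ann

/-- The non-recursive tree provenance semantics `NRT`. -/
noncomputable def NRT [CommSemiring K] (prog : Set (Rule P C)) (db : AnnDB P C K)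
    (a : Fact P C) : K :=
  ∑ᶠ (t : DTree prog db.facts a) (_ : t.nonRecursive), t.weight db.ann

/-- The minimal depth tree provenance semantics `MDT`. -/
noncomputable def MDT [CommSemiring K] (prog : Set (Rule P C)) (db : AnnDB P C K)
    (a : Fact P C) : K :=
  ∑ᶠ (t : DTree prog db.facts a) (_ : t.minimalDepth), t.weight db.ann

/-- The hereditary minimal depth tree provenance semantics `HMDT`. -/
noncomputable def HMDT [CommSemiring K] (prog : Set (Rule P C)) (db : AnnDB P C K)
    (a : Fact P C) : K :=
  ∑ᶠ (t : DTree prog db.facts a) (_ : t.hereditaryMinimal), t.weight db.ann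

/-- `σ'` agrees with `σ` on the head variables of `r` (i.e. `h'(x⃗) = h(x⃗)`). -/
def headAgree (r : Rule P C) (σ σ' : Fin r.nvars → C) : Prop :=
  ∀ v : Fin r.nvars, Term.var v ∈ r.head.args → σ' v = σ v

/-- A `K`-annotated interpretation `(I,μ)` is a model of `Σ` and `(D,K,λ)`. -/
def IsAnnModel [CommSemiring K] [PartialOrder K] (prog : Set (Rule P C)) (db : AnnDB P C K)
    (I : Set (Fact P C)) (μ : Fact P C → K) : Prop :=
  db.facts ⊆ I ∧ (∀ a ∈ db.facts, db.ann a ≤ μ a) ∧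
  ∀ r ∈ prog, ∀ σ : Fin r.nvars → C, (∀ i, (r.body i).subst σ ∈ I) →
    r.head.subst σ ∈ I ∧
    setSum {σ' : Fin r.nvars → C | (∀ i, (r.body i).subst σ' ∈ I) ∧ headAgree r σ σ'}
        (fun σ' => ∏ i : Fin r.nbody, μ ((r.body i).subst σ'))
      ≤ μ (r.head.subst σ)

/-- The annotated model-based provenance semantics `AM`: the greatest lower bound, over all
annotated models, of the annotation of `a` (and `0` if `a` is not entailed). -/
noncomputable def AM [CommSemiring K] [PartialOrder K] (prog : Set (Rule P C))
    (db : AnnDB P C K) (a : Fact P C) : K :=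
  if Entails prog db.facts a then
    setInf { x | ∃ I μ, IsAnnModel prog db I μ ∧ μ a = x }
  else 0

/-- A `K`-set-annotated interpretation `(I,μ)` is a model of `Σ` and `(D,K,λ)`. -/
def IsSetAnnModel [CommSemiring K] (prog : Set (Rule P C)) (db : AnnDB P C K)
    (I : Set (Fact P C)) (μ : Fact P C → Set K) : Prop :=
  db.facts ⊆ I ∧ (∀ a ∈ db.facts, db.ann a ∈ μ a) ∧
  ∀ r ∈ prog, ∀ σ : Fin r.nvars → C, (∀ i, (r.body i).subst σ ∈ I) →
    r.head.subst σ ∈ I ∧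
    ∀ g : Fin r.nbody → K, (∀ i, g i ∈ μ ((r.body i).subst σ)) →
      (∏ i, g i) ∈ μ (r.head.subst σ)

/-- The set-annotated model-based provenance semantics `SAM`: the sum of the elements of the
intersection, over all set-annotated models, of the annotation set of `a`. -/
noncomputable def SAM [CommSemiring K] [PartialOrder K] (prog : Set (Rule P C))
    (db : AnnDB P C K) (a : Fact P C) : K :=
  setSum { k : K | ∀ I μ, IsSetAnnModel prog db I μ → k ∈ μ a } id

/-- The schema of a program: the predicates occurring in its rules. -/
def progSchema (prog : Set (Rule P C)) : Set P :=
  { p | ∃ r ∈ prog, r.head.pred = p ∨ ∃ i, (r.body i).pred = p }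

/-- The schema of a database: the predicates occurring in its facts. -/
def dbSchema (D : Set (Fact P C)) : Set P := { p | ∃ a ∈ D, a.pred = p }

/-- The domain of a database: the constants occurring in its facts. -/
def dbConsts (D : Set (Fact P C)) : Set C := { c | ∃ a ∈ D, c ∈ a.args }

/-- A ground rule built from a list of facts (the body) and a fact (the head). -/
def factRule (body : List (Fact P C)) (head : Fact P C) : Rule P C where
  nvars := 0
  nbody := body.length
  body := fun i => (body.get i).toRuleAtom 0
  head := head.toRuleAtom 0
  vars_in_body := fun v => v.elim0

/-- A ground instance of a rule. -/
def Rule.ground (r : Rule P C) (σ : Fin r.nvars → C) : Rule P C where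
  nvars := 0
  nbody := r.nbody
  body := fun i => ((r.body i).subst σ).toRuleAtom 0
  head := (r.head.subst σ).toRuleAtom 0
  vars_in_body := fun v => v.elim0

/-- The grounding `Σ_D` of a program w.r.t. the domain of a database. -/
def grounding (prog : Set (Rule P C)) (D : Set (Fact P C)) : Set (Rule P C) :=
  { r' | ∃ r ∈ prog, ∃ σ : Fin r.nvars → C, (∀ v, σ v ∈ dbConsts D) ∧ r' = r.ground σ }

/-- Renaming of predicates in a rule. -/
def Rule.mapPred {Q : Type} (f : P → Q) (r : Rule P C) : Rule Q C where
  nvars := r.nvars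
  nbody := r.nbody
  body := fun i => (r.body i).mapPred f
  head := r.head.mapPred f
  vars_in_body := fun v => r.vars_in_body v

/-- An adornment of a rule: exactly one body atom is adorned (sent to the `Sum.inr` copy of
the predicates), the head is adorned or not, all the other atoms keep their predicates
(`Sum.inl` copy). -/
def adornRule (r : Rule P C) (i : Fin r.nbody) (adornHead : Bool) : Rule (P ⊕ P) C where
  nvars := r.nvars
  nbody := r.nbody
  body := fun j => if j = i then (r.body j).mapPred Sum.inr else (r.body j).mapPred Sum.inl
  head := if adornHead then r.head.mapPred Sum.inr else r.head.mapPred Sum.inl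
  vars_in_body := by
    intro v
    obtain ⟨j, hj⟩ := r.vars_in_body v
    refine ⟨j, ?_⟩
    try dsimp only
    split <;> exact hj

/-- The set of adornments of a rule. -/
def adornedRules (r : Rule P C) : Set (Rule (P ⊕ P) C) :=
  { r' | ∃ (i : Fin r.nbody) (b : Bool), r' = adornRule r i b }

/-!
In an absorptive semiring `a * b ≤ a` and `a + a = a`. Hence the weight of a derivation tree is
at most the weight of any of its subtrees, and a tree in which a fact repeats along a branch can
be replaced by the subtree at the lower occurrence without decreasing its weight. So every
derivation tree is dominated by a non-recursive one, while idempotence lets the finitely many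
non-recursive trees absorb all the others: their sum is the least upper bound of all finite
partial sums. Finiteness holds because a non-recursive tree uses only the finitely many facts
built from the rule heads and the constants of the program and the database, none of them twice
along a branch.
-/

namespace OmegaCommSemiring

variable {K : Type} [OmegaCommSemiring K]

instance : CanonicallyOrderedAdd K where
  exists_add_of_le h := ((le_iff_exists_add _ _).1 h).imp fun _ hc => hc.symm
  le_add_self a b := (le_iff_exists_add _ _).2 ⟨b, add_comm a b⟩
  le_self_add _ b := (le_iff_exists_add _ _).2 ⟨b, rfl⟩

instance : IsOrderedAddMonoid K := CanonicallyOrderedAdd.toIsOrderedAddMonoid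

variable (habs : ∀ a b : K, a * b + a = a)
include habs

theorem mul_le_left_of_absorptive (a b : K) : a * b ≤ a :=
  le_self_add.trans_eq (habs a b)

theorem add_le_of_absorptive {a b c : K} (ha : a ≤ c) (hb : b ≤ c) : a + b ≤ c :=
  calc a + b ≤ c + c := add_le_add ha hb
    _ = c := by simpa using habs c 1

theorem sum_le_of_absorptive {ι : Type*} {s : Finset ι} {f : ι → K} {c : K}
    (h : ∀ i ∈ s, f i ≤ c) : ∑ i ∈ s, f i ≤ c :=
  Finset.sum_induction f (· ≤ c) (fun _ _ => add_le_of_absorptive habs) zero_le h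

theorem prod_le_of_mem_of_absorptive {ι : Type*} {s : Finset ι} {f : ι → K} {i : ι}
    (hi : i ∈ s) : ∏ j ∈ s, f j ≤ f i := by
  classical
  rw [← Finset.mul_prod_erase s f hi]
  exact mul_le_left_of_absorptive habs _ _

end OmegaCommSemiring

open OmegaCommSemiring

namespace DTree

variable {prog : Set (Rule P C)} {D : Set (Fact P C)}

inductive IsSubtree : ∀ {b a : Fact P C}, DTree prog D b → DTree prog D a → Prop
  | refl {a : Fact P C} (t : DTree prog D a) : IsSubtree t t
  | child {b : Fact P C} {u : DTree prog D b} (r : Rule P C) (hr : r ∈ prog)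
      (σ : Fin r.nvars → C) (ch : ∀ i : Fin r.nbody, DTree prog D ((r.body i).subst σ))
      (i : Fin r.nbody) : IsSubtree u (ch i) → IsSubtree u (node r hr σ ch)

theorem weight_le_of_isSubtree [OmegaCommSemiring K] (habs : ∀ a b : K, a * b + a = a)
    (lam : Fact P C → K) {a b : Fact P C} {u : DTree prog D b} {t : DTree prog D a}
    (h : IsSubtree u t) : t.weight lam ≤ u.weight lam := by
  induction h with
  | refl t => exact le_rfl
  | child r hr σ ch i _ ih =>
    exact (prod_le_of_mem_of_absorptive habs (Finset.mem_univ i)).trans ih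

theorem avoid_mono {a : Fact P C} (t : DTree prog D a) {s s' : Set (Fact P C)} (hs : s' ⊆ s)
    (h : t.avoid s) : t.avoid s' := by
  induction t generalizing s s' with
  | leaf a _ => exact fun ha => h (hs ha)
  | node r hr σ ch ih =>
    exact ⟨fun ha => h.1 (hs ha), fun i => ih i (Set.insert_subset_insert hs) (h.2 i)⟩

theorem IsSubtree.nonRecursive {a b : Fact P C} {u : DTree prog D b} {t : DTree prog D a}
    (h : IsSubtree u t) (ht : t.nonRecursive) : u.nonRecursive := by
  induction h with
  | refl t => exact ht
  | child r hr σ ch i _ ih => exact ih ((ch i).avoid_mono (Set.empty_subset _) (ht.2 i))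

theorem avoid_insert {a b : Fact P C} (t : DTree prog D a) {s : Set (Fact P C)}
    (ht : t.avoid s) (hb : ∀ u : DTree prog D b, ¬IsSubtree u t) : t.avoid (insert b s) := by
  induction t generalizing s with
  | leaf a ha =>
    rintro (rfl | has)
    · exact hb _ (.refl _)
    · exact ht has
  | node r hr σ ch ih =>
    refine ⟨?_, fun i => ?_⟩
    · rintro (rfl | hrs)
      · exact hb _ (.refl _)
      · exact ht.1 hrs
    · rw [Set.insert_comm]
      exact ih i (ht.2 i) fun u hu => hb u (.child r hr σ ch i hu)

theorem exists_nonRecursive_weight_le [OmegaCommSemiring K] (habs : ∀ a b : K, a * b + a = a)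
    (lam : Fact P C → K) {a : Fact P C} (t : DTree prog D a) :
    ∃ t' : DTree prog D a, t'.nonRecursive ∧ t.weight lam ≤ t'.weight lam := by
  induction t with
  | leaf a ha => exact ⟨leaf a ha, Set.notMem_empty a, le_rfl⟩
  | node r hr σ ch ih =>
    choose ch' hnr hw using ih
    by_cases hrep : ∃ i, ∃ u : DTree prog D (r.head.subst σ), IsSubtree u (ch' i)
    · obtain ⟨i, u, hu⟩ := hrep
      refine ⟨u, hu.nonRecursive (hnr i), ?_⟩
      calc (node r hr σ ch).weight lam ≤ (ch i).weight lam :=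
            prod_le_of_mem_of_absorptive habs (Finset.mem_univ i)
        _ ≤ (ch' i).weight lam := hw i
        _ ≤ u.weight lam := weight_le_of_isSubtree habs lam hu
    · simp only [not_exists] at hrep
      refine ⟨node r hr σ ch', ⟨Set.notMem_empty _, fun i => ?_⟩, ?_⟩
      · exact (ch' i).avoid_insert (hnr i) (hrep i)
      · exact Finset.prod_le_prod' fun i _ => hw i

end DTree

section Finiteness

variable (prog : Set (Rule P C)) (D : Set (Fact P C))

def treeConsts : Set C :=
  (⋃ a ∈ D, {c | c ∈ a.args}) ∪ ⋃ r ∈ prog, {c | Term.const c ∈ r.head.args}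

def treeFacts : Set (Fact P C) :=
  D ∪ ⋃ r ∈ prog,
    {a | ∃ σ : Fin r.nvars → C, (∀ v, σ v ∈ treeConsts prog D) ∧ r.head.subst σ = a}

variable {prog D}

theorem treeConsts_finite (hprog : prog.Finite) (hD : D.Finite) :
    (treeConsts prog D).Finite := by
  refine (hD.biUnion fun a _ => a.args.finite_toSet).union (hprog.biUnion fun r _ => ?_)
  exact r.head.args.finite_toSet.preimage (Function.Injective.injOn fun _ _ => Term.const.inj)

theorem treeFacts_finite (hprog : prog.Finite) (hD : D.Finite) : (treeFacts prog D).Finite := by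
  refine hD.union (hprog.biUnion fun r _ => ?_)
  have : Finite (treeConsts prog D) := (treeConsts_finite hprog hD).to_subtype
  refine (Set.finite_range fun σ : Fin r.nvars → treeConsts prog D =>
    r.head.subst fun v => (σ v).1).subset ?_
  rintro _ ⟨σ, hσ, rfl⟩
  exact ⟨fun v => ⟨σ v, hσ v⟩, rfl⟩

namespace DTree

theorem args_subset_treeConsts {a : Fact P C} (t : DTree prog D a) :
    ∀ c ∈ a.args, c ∈ treeConsts prog D := by
  induction t with
  | leaf a ha => exact fun c hc => Or.inl (Set.mem_biUnion ha hc)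
  | node r hr σ ch ih =>
    intro c hc
    obtain ⟨_ | v, hu, rfl⟩ := List.mem_map.mp hc
    · exact Or.inr (Set.mem_biUnion hr hu)
    · obtain ⟨i, hvi⟩ := r.vars_in_body v
      exact ih i _ (List.mem_map.mpr ⟨_, hvi, rfl⟩)

theorem mem_treeConsts_of_children {r : Rule P C} {σ : Fin r.nvars → C}
    (ch : ∀ i : Fin r.nbody, DTree prog D ((r.body i).subst σ)) (v : Fin r.nvars) :
    σ v ∈ treeConsts prog D := by
  obtain ⟨i, hvi⟩ := r.vars_in_body v
  exact (ch i).args_subset_treeConsts _ (List.mem_map.mpr ⟨_, hvi, rfl⟩)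

theorem mem_treeFacts {a : Fact P C} (t : DTree prog D a) : a ∈ treeFacts prog D := by
  cases t with
  | leaf a ha => exact Or.inl ha
  | node r hr σ ch =>
    exact Or.inr (Set.mem_biUnion hr ⟨σ, mem_treeConsts_of_children ch, rfl⟩)

def childrenIn (S : ∀ b, Set (DTree prog D b)) : ∀ {a : Fact P C}, DTree prog D a → Prop
  | _, .leaf _ _ => True
  | _, .node _ _ _ ch => ∀ i, ch i ∈ S _

theorem finite_setOf_childrenIn (hprog : prog.Finite) (hD : D.Finite)
    {S : ∀ b, Set (DTree prog D b)} (hS : ∀ b, (S b).Finite) (a : Fact P C) :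
    {t : DTree prog D a | t.childrenIn S}.Finite := by
  have : Finite prog := hprog.to_subtype
  have : Finite (treeConsts prog D) := (treeConsts_finite hprog hD).to_subtype
  have : ∀ b, Finite (S b) := fun b => (hS b).to_subtype
  -- a node is determined by its rule, its homomorphism into `treeConsts` and its children
  let Code := {c : Σ (r : prog) (σ : Fin r.1.nvars → treeConsts prog D),
      ∀ i, S ((r.1.body i).subst fun v => (σ v).1) //
    c.1.1.head.subst (fun v => (c.2.1 v).1) = a}
  let decode (c : Code) : DTree prog D a :=
    c.2 ▸ node c.1.1.1 c.1.1.2 (fun v => (c.1.2.1 v).1) fun i => (c.1.2.2 i).1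
  refine ((Set.finite_range fun h : a ∈ D => leaf a h).union
    (Set.finite_range decode)).subset ?_
  intro t ht
  cases t with
  | leaf a ha => exact Or.inl ⟨ha, rfl⟩
  | node r hr σ ch =>
    exact Or.inr ⟨⟨⟨⟨r, hr⟩, fun v => ⟨σ v, mem_treeConsts_of_children ch v⟩,
      fun i => ⟨ch i, ht i⟩⟩, rfl⟩, rfl⟩

theorem notMem_of_avoid {a : Fact P C} {s : Set (Fact P C)} {t : DTree prog D a}
    (ht : t.avoid s) : a ∉ s := by
  cases t with
  | leaf => exact ht
  | node => exact ht.1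

theorem finite_setOf_avoid (hprog : prog.Finite) (hD : D.Finite) (s : Set (Fact P C))
    (a : Fact P C) : {t : DTree prog D a | t.avoid s}.Finite := by
  induction hn : (treeFacts prog D \ s).ncard using Nat.strong_induction_on generalizing s a with
  | _ n ih =>
  rcases Set.eq_empty_or_nonempty {t : DTree prog D a | t.avoid s} with h | ⟨t, ht⟩
  · exact h ▸ Set.finite_empty
  have ha : a ∈ treeFacts prog D \ s := ⟨t.mem_treeFacts, notMem_of_avoid ht⟩
  have hlt : (treeFacts prog D \ insert a s).ncard < n := by
    refine hn ▸ Set.ncard_lt_ncard ?_ (treeFacts_finite hprog hD).sdiff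
    exact ⟨Set.sdiff_subset_sdiff_right (Set.subset_insert a s),
      fun h => (h ha).2 (Set.mem_insert a s)⟩
  refine (finite_setOf_childrenIn hprog hD (fun b => ih _ hlt (insert a s) b rfl) a).subset ?_
  intro t ht
  cases t with
  | leaf => trivial
  | node r hr σ ch => exact ht.2

theorem finite_setOf_nonRecursive (hprog : prog.Finite) (hD : D.Finite) (a : Fact P C) :
    {t : DTree prog D a | t.nonRecursive}.Finite :=
  finite_setOf_avoid hprog hD ∅ a

end DTree

end Finiteness

theorem setSum_eq_of_isLUB [AddCommMonoid K] [PartialOrder K] {T : Type} {S : Set T}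
    {f : T → K} {x : K} (h : IsLUB (partialSums S f) x) : setSum S f = x := by
  have hex : ∃ x, IsLUB (partialSums S f) x := ⟨x, h⟩
  rw [setSum, dif_pos hex]
  exact hex.choose_spec.unique h

theorem isLUB_partialSums_of_forall_le [OmegaCommSemiring K]
    (habs : ∀ a b : K, a * b + a = a) {T : Type} {S : Set T} {f : T → K} {F : Finset T}
    (hF : ↑F ⊆ S) (hle : ∀ t ∈ S, ∃ t' ∈ F, f t ≤ f t') :
    IsLUB (partialSums S f) (∑ t ∈ F, f t) := by
  refine ⟨?_, fun b hb => hb ⟨F, hF, rfl⟩⟩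
  rintro _ ⟨G, hG, rfl⟩
  refine sum_le_of_absorptive habs fun t ht => ?_
  obtain ⟨t', ht', hle⟩ := hle t (hG ht)
  exact hle.trans (Finset.single_le_sum (fun _ _ => zero_le) ht')

theorem statement_10_general (P C K : Type) [OmegaCommSemiring K]
    (habs : ∀ a b : K, a * b + a = a)
    (prog : Set (Rule P C)) (hprog : prog.Finite)
    (db : AnnDB P C K) (hfin : db.facts.Finite)
    (α : Fact P C) :
    NRT prog db α = AT prog db α := by
  have hNR := DTree.finite_setOf_nonRecursive hprog hfin α
  have hle (t : DTree prog db.facts α) (_ : t ∈ Set.univ) :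
      ∃ t' ∈ hNR.toFinset, t.weight db.ann ≤ t'.weight db.ann := by
    obtain ⟨t', hnr, hw⟩ := t.exists_nonRecursive_weight_le habs db.ann
    exact ⟨t', hNR.mem_toFinset.mpr hnr, hw⟩
  calc NRT prog db α = ∑ t ∈ hNR.toFinset, t.weight db.ann :=
        finsum_mem_eq_finite_toFinset_sum _ hNR
    _ = AT prog db α :=
        (setSum_eq_of_isLUB (isLUB_partialSums_of_forall_le habs (Set.subset_univ _) hle)).symm

/-- on absorptive commutative ω-continuous semirings, `NRT = AT`. -/
theorem statement_10 (P C K : Type) [OmegaCommSemiring K]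
    (habs : ∀ a b : K, a * b + a = a)
    (prog : Set (Rule P C)) (hprog : prog.Finite)
    (db : AnnDB P C K) (hfin : db.facts.Finite)
    (hann : ∀ a ∈ db.facts, db.ann a ≠ 0) (α : Fact P C) :
    NRT prog db α = AT prog db α :=
  statement_10_general P C K habs prog hprog db hfin α

end Datalog
end

section
/- For every Datalog program Σ, annotated database (D,K,λ) with K a commutative ω-continuous semiring, every i ≥ 0, and every fact α belonging to the i-th naive evaluation stage I_n^i, the annotation satisfies λ_n^i(α) = Σ_{t ∈ T(α), depth(t) ≤ i} Λ(t). -/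
attribute [local instance] Classical.propDecidable

namespace Datalog

variable {P C K : Type}

/-! A derivation tree of `α` of depth at most `n + 1` is either the leaf `α` (available iff
`α ∈ D`, with weight `λ(α)`) or a rule application `(r, h)` deriving `α` whose children are
trees of depth at most `n` of the body facts; its weight is the product of theirs. Summing and
distributing the products over the sums, the tree sums satisfy the same recursion as the naive
evaluation, `λ(α) + Σ_{(r,h)} ∏_j (tree sum of the j-th body fact)`, where the rule
applications range over the facts having a tree of depth at most `n`, which are exactly the
facts of the `n`-th stage. Finiteness of `Σ` and `D` keeps every sum finite. -/

namespace DTree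

variable {prog : Set (Rule P C)} {D : Set (Fact P C)}

lemma depth_node_le_succ_iff {r : Rule P C} {hr : r ∈ prog} {σ : Fin r.nvars → C}
    {ch : ∀ j, DTree prog D ((r.body j).subst σ)} {n : ℕ} :
    (node r hr σ ch).depth ≤ n + 1 ↔ ∀ j, (ch j).depth ≤ n := by
  simp [depth, Finset.sup_le_iff]

lemma not_depth_node_le_zero {r : Rule P C} {hr : r ∈ prog} {σ : Fin r.nvars → C}
    {ch : ∀ j, DTree prog D ((r.body j).subst σ)} : ¬ (node r hr σ ch).depth ≤ 0 := by
  simp [depth]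

end DTree

def derivedWithin (prog : Set (Rule P C)) (D : Set (Fact P C)) (n : ℕ) : Set (Fact P C) :=
  { β | ∃ t : DTree prog D β, t.depth ≤ n }

def ruleApplications (prog : Set (Rule P C)) (I : Set (Fact P C)) (α : Fact P C) :
    Set ((r : Rule P C) × (Fin r.nvars → C)) :=
  { p | p.1 ∈ prog ∧ (∀ j, (p.1.body j).subst p.2 ∈ I) ∧ p.1.head.subst p.2 = α }

section Finiteness

variable {prog : Set (Rule P C)} {I : Set (Fact P C)}

lemma dbConsts_finite (hI : I.Finite) : (dbConsts I).Finite := by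
  have : dbConsts I = ⋃ a ∈ I, {c | c ∈ a.args} := by ext c; simp [dbConsts]
  exact this ▸ hI.biUnion fun a _ => a.args.finite_toSet

lemma mem_dbConsts_of_body_mem {r : Rule P C} {σ : Fin r.nvars → C}
    (hbody : ∀ j, (r.body j).subst σ ∈ I) (v : Fin r.nvars) : σ v ∈ dbConsts I := by
  obtain ⟨j, hj⟩ := r.vars_in_body v
  exact ⟨(r.body j).subst σ, hbody j, List.mem_map_of_mem hj⟩

/-- Every variable occurs in the body, so a body instance in a finite `I` leaves only
finitely many choices for the substitution. -/
lemma setOf_body_mem_finite (hprog : prog.Finite) (hI : I.Finite) :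
    { p : (r : Rule P C) × (Fin r.nvars → C) |
      p.1 ∈ prog ∧ ∀ j, (p.1.body j).subst p.2 ∈ I }.Finite := by
  refine (hprog.biUnion fun r _ =>
    ((Set.Finite.pi' fun _ => dbConsts_finite hI).image (Sigma.mk r))).subset ?_
  rintro ⟨r, σ⟩ ⟨hr, hbody⟩
  exact Set.mem_biUnion hr ⟨σ, mem_dbConsts_of_body_mem hbody, rfl⟩

lemma ruleApplications_finite (hprog : prog.Finite) (hI : I.Finite) (α : Fact P C) :
    (ruleApplications prog I α).Finite :=
  (setOf_body_mem_finite hprog hI).subset fun _ ⟨hr, hbody, _⟩ => ⟨hr, hbody⟩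

lemma derivable_finite (hprog : prog.Finite) (hI : I.Finite) : (derivable prog I).Finite := by
  refine ((setOf_body_mem_finite hprog hI).image fun p => p.1.head.subst p.2).subset ?_
  rintro _ ⟨r, hr, σ, hbody, rfl⟩
  exact ⟨⟨r, σ⟩, ⟨hr, hbody⟩, rfl⟩

end Finiteness

section DerivedWithin

variable {prog : Set (Rule P C)} {D : Set (Fact P C)}

lemma derivedWithin_zero : derivedWithin prog D 0 = D := by
  ext β
  constructor
  · rintro ⟨t | t, ht⟩
    · assumption
    · exact absurd ht DTree.not_depth_node_le_zero
  · exact fun h => ⟨.leaf β h, le_rfl⟩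

lemma derivedWithin_succ (n : ℕ) :
    derivedWithin prog D (n + 1) = derivable prog (derivedWithin prog D n) ∪ D := by
  ext β
  constructor
  · rintro ⟨_ | ⟨r, hr, σ, ch⟩, ht⟩
    · exact Or.inr ‹_›
    · exact Or.inl ⟨r, hr, σ, fun j => ⟨ch j, DTree.depth_node_le_succ_iff.mp ht j⟩, rfl⟩
  · rintro (⟨r, hr, σ, hbody, rfl⟩ | h)
    · choose ch hch using hbody
      exact ⟨.node r hr σ ch, DTree.depth_node_le_succ_iff.mpr hch⟩
    · exact ⟨.leaf β h, Nat.zero_le _⟩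

lemma derivedWithin_finite (hprog : prog.Finite) (hD : D.Finite) :
    ∀ n, (derivedWithin prog D n).Finite
  | 0 => derivedWithin_zero (prog := prog) ▸ hD
  | n + 1 => derivedWithin_succ n ▸
      (derivable_finite hprog (derivedWithin_finite hprog hD n)).union hD

end DerivedWithin

section Equiv

variable {prog : Set (Rule P C)} {D : Set (Fact P C)}

def depthLeZeroEquiv (α : Fact P C) : {t : DTree prog D α // t.depth ≤ 0} ≃ PLift (α ∈ D) where
  toFun t := match α, t with
    | _, ⟨.leaf _ h, _⟩ => ⟨h⟩
    | _, ⟨.node _ _ _ _, ht⟩ => absurd ht DTree.not_depth_node_le_zero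
  invFun h := ⟨.leaf α h.down, le_rfl⟩
  left_inv t := match α, t with
    | _, ⟨.leaf _ _, _⟩ => rfl
    | _, ⟨.node _ _ _ _, ht⟩ => absurd ht DTree.not_depth_node_le_zero
  right_inv _ := rfl

def depthLeSuccEquiv (n : ℕ) (α : Fact P C) :
    {t : DTree prog D α // t.depth ≤ n + 1} ≃
      PLift (α ∈ D) ⊕ Σ p : ruleApplications prog (derivedWithin prog D n) α,
        ∀ j, {t : DTree prog D ((p.1.1.body j).subst p.1.2) // t.depth ≤ n} where
  toFun t := match α, t with
    | _, ⟨.leaf _ h, _⟩ => .inl ⟨h⟩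
    | _, ⟨.node r hr σ ch, ht⟩ =>
      .inr ⟨⟨⟨r, σ⟩, hr, fun j => ⟨ch j, DTree.depth_node_le_succ_iff.mp ht j⟩, rfl⟩,
        fun j => ⟨ch j, DTree.depth_node_le_succ_iff.mp ht j⟩⟩
  invFun
    | .inl h => ⟨.leaf α h.down, Nat.zero_le _⟩
    | .inr ⟨⟨⟨r, σ⟩, hr, _, hα⟩, ch⟩ =>
      hα ▸ ⟨.node r hr σ fun j => (ch j).1, DTree.depth_node_le_succ_iff.mpr fun j => (ch j).2⟩
  left_inv t := match α, t with
    | _, ⟨.leaf _ _, _⟩ => rfl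
    | _, ⟨.node _ _ _ _, _⟩ => rfl
  right_inv
    | .inl _ => rfl
    | .inr ⟨⟨⟨_, _⟩, _, _, hα⟩, _⟩ => by subst hα; rfl

lemma weight_depthLeSuccEquiv_symm_inr [CommSemiring K] (lam : Fact P C → K) {n : ℕ}
    {α : Fact P C} (p : ruleApplications prog (derivedWithin prog D n) α)
    (ch : ∀ j, {t : DTree prog D ((p.1.1.body j).subst p.1.2) // t.depth ≤ n}) :
    ((depthLeSuccEquiv n α).symm (.inr ⟨p, ch⟩)).1.weight lam = ∏ j, (ch j).1.weight lam := by
  obtain ⟨⟨r, σ⟩, hr, _, rfl⟩ := p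
  rfl

end Equiv

section TreeSums

variable {prog : Set (Rule P C)} {D : Set (Fact P C)}

lemma finite_depth_le (hprog : prog.Finite) (hD : D.Finite) :
    ∀ (n : ℕ) (α : Fact P C), Finite {t : DTree prog D α // t.depth ≤ n}
  | 0, α => Finite.of_equiv _ (depthLeZeroEquiv α).symm
  | n + 1, α =>
    have := (ruleApplications_finite hprog (derivedWithin_finite hprog hD n) α).to_subtype
    have := finite_depth_le hprog hD n
    Finite.of_equiv _ (depthLeSuccEquiv n α).symm

variable [CommSemiring K]

lemma sum_plift_mem_facts (db : AnnDB P C K) (α : Fact P C) [Fintype (PLift (α ∈ db.facts))] :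
    ∑ _ : PLift (α ∈ db.facts), db.ann α = db.ann α := by
  by_cases h : α ∈ db.facts
  · have : Unique (PLift (α ∈ db.facts)) := ⟨⟨⟨h⟩⟩, fun _ => rfl⟩
    exact Fintype.sum_unique _
  · have : IsEmpty (PLift (α ∈ db.facts)) := ⟨fun h' => h h'.down⟩
    rw [Fintype.sum_empty, db.ann_eq_zero α h]

lemma finsum_weight_depth_le_zero (db : AnnDB P C K) (α : Fact P C) :
    ∑ᶠ (t : DTree prog db.facts α) (_ : t.depth ≤ 0), t.weight db.ann = db.ann α := by
  let e := depthLeZeroEquiv (prog := prog) (D := db.facts) α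
  have : Fintype {t : DTree prog db.facts α // t.depth ≤ 0} := Fintype.ofEquiv _ e.symm
  rw [← finsum_subtype_eq_finsum_cond, finsum_eq_sum_of_fintype,
    Fintype.sum_equiv e _ (fun _ => db.ann α), sum_plift_mem_facts]
  intro t
  rw [← e.symm_apply_apply t]
  rfl

lemma finsum_weight_depth_le_succ (hprog : prog.Finite) (db : AnnDB P C K)
    (hfin : db.facts.Finite) (n : ℕ) (α : Fact P C) :
    ∑ᶠ (t : DTree prog db.facts α) (_ : t.depth ≤ n + 1), t.weight db.ann =
      db.ann α + ∑ᶠ p ∈ ruleApplications prog (derivedWithin prog db.facts n) α,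
        ∏ j, ∑ᶠ (t : DTree prog db.facts ((p.1.body j).subst p.2)) (_ : t.depth ≤ n),
          t.weight db.ann := by
  let e := depthLeSuccEquiv (prog := prog) (D := db.facts) n α
  have : ∀ β, Fintype {t : DTree prog db.facts β // t.depth ≤ n} := fun β =>
    have := finite_depth_le hprog hfin n β
    Fintype.ofFinite _
  have : Fintype (ruleApplications prog (derivedWithin prog db.facts n) α) :=
    (ruleApplications_finite hprog (derivedWithin_finite hprog hfin n) α).fintype
  have : Fintype {t : DTree prog db.facts α // t.depth ≤ n + 1} := Fintype.ofEquiv _ e.symm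
  simp only [← finsum_subtype_eq_finsum_cond, finsum_eq_sum_of_fintype, Fintype.prod_sum]
  rw [Fintype.sum_equiv e _ (fun x => (e.symm x).1.weight db.ann) (fun t => by simp),
    Fintype.sum_sum_type, Fintype.sum_sigma]
  simp only [e, weight_depthLeSuccEquiv_symm_inr]
  congr 1
  exact sum_plift_mem_facts db α

end TreeSums

section NaiveEvaluation

variable [CommSemiring K] {prog : Set (Rule P C)}

lemma naiveSeq_facts (db : AnnDB P C K) :
    ∀ n, (naiveSeq prog db n).facts = derivedWithin prog db.facts n
  | 0 => derivedWithin_zero.symm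
  | n + 1 => by rw [derivedWithin_succ, ← naiveSeq_facts db n]; rfl

lemma ruleSum_eq_finsum_ruleApplications (I : Set (Fact P C)) (lam : Fact P C → K)
    (α : Fact P C) :
    ruleSum prog I lam α = ∑ᶠ p ∈ ruleApplications prog I α, ∏ j, lam ((p.1.body j).subst p.2) :=
  rfl

lemma Tcons_ann (db : AnnDB P C K) : (Tcons prog db).ann = ruleSum prog db.facts db.ann := by
  funext α
  by_cases h : α ∈ derivable prog db.facts
  · exact if_pos h
  · refine (if_neg h).trans ?_
    rw [ruleSum_eq_finsum_ruleApplications, eq_comm]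
    exact finsum_mem_of_eqOn_zero fun p hp => absurd ⟨p.1, hp.1, p.2, hp.2⟩ h

theorem naiveSeq_ann_eq_finsum_weight (hprog : prog.Finite) (db : AnnDB P C K)
    (hfin : db.facts.Finite) : ∀ (n : ℕ) (α : Fact P C),
    (naiveSeq prog db n).ann α =
      ∑ᶠ (t : DTree prog db.facts α) (_ : t.depth ≤ n), t.weight db.ann
  | 0, α => (finsum_weight_depth_le_zero db α).symm
  | n + 1, α => by
    have ih := naiveSeq_ann_eq_finsum_weight hprog db hfin n
    calc (naiveSeq prog db (n + 1)).ann α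
        = (Tcons prog (naiveSeq prog db n)).ann α + db.ann α := rfl
      _ = db.ann α + ∑ᶠ p ∈ ruleApplications prog (derivedWithin prog db.facts n) α,
            ∏ j, (naiveSeq prog db n).ann ((p.1.body j).subst p.2) := by
        rw [Tcons_ann, ruleSum_eq_finsum_ruleApplications, naiveSeq_facts, add_comm]
      _ = _ := by simp only [ih, finsum_weight_depth_le_succ hprog db hfin]

end NaiveEvaluation

theorem statement_13_general (P C K : Type) [OmegaCommSemiring K]
    (prog : Set (Rule P C)) (hprog : prog.Finite)
    (db : AnnDB P C K) (hfin : db.facts.Finite)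
    (i : ℕ) (α : Fact P C) :
    (naiveSeq prog db i).ann α =
      ∑ᶠ (t : DTree prog db.facts α) (_ : t.depth ≤ i), t.weight db.ann :=
  naiveSeq_ann_eq_finsum_weight hprog db hfin i α

/-- along the naive evaluation, the annotation of a derived fact at stage `i`
is the sum of the annotations of its derivation trees of depth at most `i`. -/
theorem statement_13 (P C K : Type) [OmegaCommSemiring K]
    (prog : Set (Rule P C)) (hprog : prog.Finite)
    (db : AnnDB P C K) (hfin : db.facts.Finite)
    (hann : ∀ a ∈ db.facts, db.ann a ≠ 0) (i : ℕ) (α : Fact P C)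
    (hα : α ∈ (naiveSeq prog db i).facts) :
    (naiveSeq prog db i).ann α =
      ∑ᶠ (t : DTree prog db.facts α) (_ : t.depth ≤ i), t.weight db.ann :=
  statement_13_general P C K prog hprog db hfin i α

end Datalog
end
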